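/- The complementary-wavelet-packet construction commutes with the filtering recursion: let m ≥ 1 with 2^m dividing N, let ψ, ψ′ ∈ Π[N], and let h be an N/2^m-periodic filter such that ψ′[n] = Σ_{k=0}^{N/2^m−1} h[k]·ψ[n−2^m k] for all n. Define the operator 𝒦 on Π[N] by (𝒦x)^[n] = −i·x̂[n] for 0 < n < N/2, (𝒦x)^[n] = i·x̂[n] for N/2 < n < N, and (𝒦x)^[n] = x̂[n] for n ∈ {0, N/2}. Then 𝒦ψ′[n] = Σ_{k=0}^{N/2^m−1} h[k]·(𝒦ψ)[n−2^m k] for all n. -/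

import Mathlib

open Finset

noncomputable def omegaN (N : ℕ) : ℂ := Complex.exp (2 * Real.pi * Complex.I / N)

noncomputable def dft (N : ℕ) (x : ℤ → ℂ) (n : ℤ) : ℂ :=
  ∑ k ∈ Finset.range N, x k * omegaN N ^ (-((k : ℤ) * n))

/-- The operator 𝒦 on Π[N]: (𝒦x)^[n] = −i·x̂[n] for 0 < n < N/2, i·x̂[n] for N/2 < n < N,
and x̂[n] for n ∈ {0, N/2}; given here via the inverse DFT. -/
noncomputable def Kop (N : ℕ) (x : ℤ → ℂ) (k : ℤ) : ℂ :=
  (N : ℂ)⁻¹ * ∑ n ∈ Finset.range N,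
    (if n = 0 ∨ 2 * n = N then 1 else if 2 * n < N then -Complex.I else Complex.I) *
      dft N x n * omegaN N ^ (k * (n : ℤ))

/-
𝒦 is a Fourier multiplier, so it is linear and commutes with the translations of Π[N]
(a translation only multiplies each DFT coefficient by a root of unity). Since ψ′ is a linear
combination of translates of ψ, applying 𝒦 to it amounts to applying 𝒦 to each translate.
-/

theorem Function.Periodic.sum_range_comp_sub_one {M : Type*} [AddCommMonoid M] {N : ℕ}
    {f : ℤ → M} (hf : Function.Periodic f N) :
    ∑ l ∈ range N, f (l - 1) = ∑ l ∈ range N, f l := by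
  cases N with
  | zero => simp
  | succ M =>
    rw [sum_range_succ', sum_range_succ, ← hf (((0 : ℕ) : ℤ) - 1)]
    push_cast
    simp only [add_sub_cancel_right]
    congr 2
    ring

theorem Function.Periodic.sum_range_comp_sub {M : Type*} [AddCommMonoid M] {N : ℕ}
    {f : ℤ → M} (hf : Function.Periodic f N) (s : ℤ) :
    ∑ l ∈ range N, f (l - s) = ∑ l ∈ range N, f l := by
  induction s using Int.induction_on with
  | zero => simp
  | succ s ih =>
    rw [← ih, ← (hf.sub_const s).sum_range_comp_sub_one]
    simp only [sub_sub, add_comm (1 : ℤ)]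
  | pred s ih =>
    rw [← ih, ← (hf.sub_const (-(s : ℤ) - 1)).sum_range_comp_sub_one]
    congr! 2
    ring

theorem omegaN_ne_zero (N : ℕ) : omegaN N ≠ 0 :=
  Complex.exp_ne_zero _

theorem isPrimitiveRoot_omegaN {N : ℕ} (hN : N ≠ 0) : IsPrimitiveRoot (omegaN N) N :=
  Complex.isPrimitiveRoot_exp N hN

theorem periodic_omegaN_zpow_neg_mul {N : ℕ} (hN : N ≠ 0) (n : ℤ) :
    Function.Periodic (fun t : ℤ => omegaN N ^ (-(t * n))) N := fun t => by
  dsimp only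
  rw [show -((t + N) * n) = -(t * n) + N * -n by ring, zpow_add₀ (omegaN_ne_zero N), zpow_mul,
    (isPrimitiveRoot_omegaN hN).zpow_eq_one, one_zpow, mul_one]

theorem dft_comp_sub {N : ℕ} (hN : N ≠ 0) {x : ℤ → ℂ} (hx : Function.Periodic x N) (s n : ℤ) :
    dft N (fun t => x (t - s)) n = omegaN N ^ (-(s * n)) * dft N x n := by
  have hsummand_periodic := hx.mul (periodic_omegaN_zpow_neg_mul hN n)
  calc dft N (fun t => x (t - s)) n
      = ∑ l ∈ range N, x (l - s) * omegaN N ^ (-((l - s) * n)) * omegaN N ^ (-(s * n)) := by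
        refine sum_congr rfl fun l _ => ?_
        rw [mul_assoc, ← zpow_add₀ (omegaN_ne_zero N)]
        congr 2
        ring
    _ = omegaN N ^ (-(s * n)) * dft N x n := by
        rw [← sum_mul, hsummand_periodic.sum_range_comp_sub (f := fun t => x t * omegaN N ^ (-(t * n))),
          mul_comm, dft]

theorem dft_sum_mul {ι : Type*} (N : ℕ) (S : Finset ι) (c : ι → ℂ) (x : ι → ℤ → ℂ) (n : ℤ) :
    dft N (fun t => ∑ i ∈ S, c i * x i t) n = ∑ i ∈ S, c i * dft N (x i) n := by
  simp only [dft, sum_mul, mul_sum]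
  rw [sum_comm]
  simp only [mul_assoc]

theorem Kop_comp_sub {N : ℕ} (hN : N ≠ 0) {x : ℤ → ℂ} (hx : Function.Periodic x N) (s k : ℤ) :
    Kop N (fun t => x (t - s)) k = Kop N x (k - s) := by
  simp only [Kop, dft_comp_sub hN hx]
  congr 1
  refine sum_congr rfl fun n _ => ?_
  rw [sub_mul, sub_eq_add_neg, zpow_add₀ (omegaN_ne_zero N), neg_mul_eq_neg_mul]
  ring

theorem Kop_sum_mul {ι : Type*} (N : ℕ) (S : Finset ι) (c : ι → ℂ) (x : ι → ℤ → ℂ) (k : ℤ) :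
    Kop N (fun t => ∑ i ∈ S, c i * x i t) k = ∑ i ∈ S, c i * Kop N (x i) k := by
  simp only [Kop, dft_sum_mul, mul_sum, sum_mul]
  rw [sum_comm]
  refine sum_congr rfl fun i _ => sum_congr rfl fun n _ => ?_
  ring

theorem stmt_16_general (j m : ℕ) (N : ℕ) (hN : N = 2 ^ j)
    (ψ ψ' h : ℤ → ℂ) (hψ : ∀ k : ℤ, ψ (k + N) = ψ k)
    (hdef : ∀ n : ℤ, ψ' n = ∑ k ∈ Finset.range (N / 2 ^ m), h k * ψ (n - 2 ^ m * (k : ℤ))) :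
    ∀ n : ℤ, Kop N ψ' n = ∑ k ∈ Finset.range (N / 2 ^ m), h k * Kop N ψ (n - 2 ^ m * (k : ℤ)) := by
  intro n
  have hN0 : N ≠ 0 := hN ▸ pow_ne_zero j two_ne_zero
  rw [funext hdef, Kop_sum_mul N _ (fun k : ℕ => h k) fun k t => ψ (t - 2 ^ m * (k : ℤ))]
  exact sum_congr rfl fun k _ => by rw [Kop_comp_sub hN0 hψ]

/-- The complementary-wavelet-packet construction commutes with the
filtering recursion: if ψ′[n] = Σ_{k=0}^{N/2^m−1} h[k]·ψ[n−2^m k] for an N/2^m-periodic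
filter h, then 𝒦ψ′[n] = Σ_{k=0}^{N/2^m−1} h[k]·(𝒦ψ)[n−2^m k]. -/
theorem stmt_16 (j m : ℕ) (hj : 3 ≤ j) (hm : 1 ≤ m) (hmj : m ≤ j) (N : ℕ) (hN : N = 2 ^ j)
    (ψ ψ' h : ℤ → ℂ) (hψ : ∀ k : ℤ, ψ (k + N) = ψ k)
    (hh : ∀ k : ℤ, h (k + ((N / 2 ^ m : ℕ) : ℤ)) = h k)
    (hdef : ∀ n : ℤ, ψ' n = ∑ k ∈ Finset.range (N / 2 ^ m), h k * ψ (n - 2 ^ m * (k : ℤ))) :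
    ∀ n : ℤ, Kop N ψ' n = ∑ k ∈ Finset.range (N / 2 ^ m), h k * Kop N ψ (n - 2 ^ m * (k : ℤ)) :=
  stmt_16_general j m N hN ψ ψ' h hψ hdef
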